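/- Let d ≥ 1 and K_0 > 0, and let F : ℝ^d × S^d → ℝ satisfy degenerate ellipticity (Γ ≥ Γ′ implies F(p,Γ) ≤ F(p,Γ′)) and the Lipschitz bound |F(p,Γ) − F(p′,Γ′)| ≤ K_0(|p − p′| + ‖Γ − Γ′‖). Let Γ, Γ_0 ∈ S^d and c ≥ 0 with the smallest eigenvalue of Γ_0 − Γ at least −c, let p, p_0 ∈ ℝ^d with p ≠ p_0, let s > 0 and h > 0 satisfy √h · s ≥ K_0 h, and set w = −s (p_0 − p)/|p_0 − p|. Then √h (p_0 − p)ᵀw + (h/2) wᵀ(Γ_0 − Γ)w − h F(p,Γ) ≤ −h F(p_0, Γ_0) + (h/2) ‖Γ_0 − Γ‖ s² + K_0 h c. -/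

import Mathlib

noncomputable section

/-- Euclidean space `ℝ^d`. -/
abbrev Ed (d : ℕ) := EuclideanSpace ℝ (Fin d)

/-- The `ℓ²`-operator norm of a matrix. -/
def opN {d : ℕ} (Γ : Matrix (Fin d) (Fin d) ℝ) : ℝ :=
  ‖Matrix.toEuclideanCLM (𝕜 := ℝ) Γ‖

/-- Euclidean inner product `pᵀ w`. -/
def dotp {d : ℕ} (p w : Ed d) : ℝ := ∑ i, p i * w i

/-- Quadratic form `wᵀ Γ w`. -/
def quadForm {d : ℕ} (Γ : Matrix (Fin d) (Fin d) ℝ) (w : Ed d) : ℝ :=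
  ∑ i, ∑ j, w i * Γ i j * w j

/-- The Hessian matrix `D²φ(x)`. -/
def hess {d : ℕ} (φ : Ed d → ℝ) (x : Ed d) : Matrix (Fin d) (Fin d) ℝ :=
  Matrix.of fun i j =>
    iteratedFDeriv ℝ 2 φ x ![EuclideanSpace.single i 1, EuclideanSpace.single j 1]

/-- First-order partial derivative in direction `i`. -/
def pDeriv {d : ℕ} (i : Fin d) (φ : Ed d → ℝ) : Ed d → ℝ :=
  fun x => fderiv ℝ φ x (EuclideanSpace.single i 1)

/-- The multiindex partial derivative `D^α φ`. -/
def mDeriv {d : ℕ} (α : Fin d → ℕ) (φ : Ed d → ℝ) : Ed d → ℝ :=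
  (((List.finRange d).flatMap fun i => List.replicate (α i) i).foldr pDeriv φ)

/-- The finite set of multiindices `α` with `|α|₁ ≤ k`. -/
def multiIdx (d k : ℕ) : Finset (Fin d → ℕ) :=
  (Fintype.piFinset fun _ : Fin d => Finset.range (k + 1)).filter fun α => ∑ i, α i ≤ k

/-- `D_{h,δ} = {(p,Γ) ∈ ℝ^d × S^d : |p| ≤ K₄ h^{-δ}, ‖Γ‖ ≤ K₄ h^{-δ}}`. -/
def Dset (d : ℕ) (K4 h δ : ℝ) : Set (Ed d × Matrix (Fin d) (Fin d) ℝ) :=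
  {pΓ | pΓ.2.IsSymm ∧ ‖pΓ.1‖ ≤ K4 * h ^ (-δ) ∧ opN pΓ.2 ≤ K4 * h ^ (-δ)}

/-- `X_{h,κ} = {w ∈ ℝ^d : |w| ≤ h^{-κ}}`. -/
def Xset (d : ℕ) (h κ : ℝ) : Set (Ed d) := {w | ‖w‖ ≤ h ^ (-κ)}

end

/-! Shifting `Γ₀` by `c • 1` makes it dominate `Γ`, so ellipticity and the Lipschitz bound give
`F p₀ Γ₀ ≤ F p Γ + K₀ (|p₀ - p| + c)`. For this `w` the gradient term equals `-√h s |p₀ - p|`,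
which absorbs the cost `K₀ h |p₀ - p|` of moving `p` because `√h s ≥ K₀ h`, while `|w| ≤ |s|`
bounds the quadratic term by `‖Γ₀ - Γ‖ s²`. -/

open scoped RealInnerProductSpace MatrixOrder ComplexOrder

theorem Matrix.IsHermitian.posSemidef_add_smul_one {n 𝕜 : Type*} [Fintype n] [DecidableEq n]
    [RCLike 𝕜] {M : Matrix n n 𝕜} (hM : M.IsHermitian) {c : ℝ}
    (hc : ∀ i, -c ≤ hM.eigenvalues i) : (M + c • 1).PosSemidef := by
  have h : algebraMap ℝ (Matrix n n 𝕜) (-c) ≤ M := by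
    rw [algebraMap_le_iff_le_spectrum hM.isSelfAdjoint, hM.spectrum_real_eq_range_eigenvalues]
    rintro _ ⟨i, rfl⟩
    exact hc i
  rw [← Matrix.nonneg_iff_posSemidef]
  simpa only [Algebra.algebraMap_eq_smul_one, neg_smul, sub_neg_eq_add] using sub_nonneg.mpr h

theorem opN_smul_one_le {d : ℕ} (r : ℝ) : opN (r • 1 : Matrix (Fin d) (Fin d) ℝ) ≤ |r| := by
  rw [opN, map_smul, map_one, ← Real.norm_eq_abs]
  exact (norm_smul_le _ _).trans
    (mul_le_of_le_one_right (norm_nonneg _) (ContinuousLinearMap.norm_id_le (𝕜 := ℝ) (E := Ed d)))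

theorem opN_zero {d : ℕ} : opN (0 : Matrix (Fin d) (Fin d) ℝ) = 0 := by
  rw [opN, map_zero, norm_zero]

theorem opN_nonneg {d : ℕ} (A : Matrix (Fin d) (Fin d) ℝ) : 0 ≤ opN A := norm_nonneg _

theorem dotp_eq_inner {d : ℕ} (u v : Ed d) : dotp u v = ⟪u, v⟫ := by
  simp [dotp, PiLp.inner_apply, mul_comm]

theorem quadForm_eq_inner {d : ℕ} (A : Matrix (Fin d) (Fin d) ℝ) (w : Ed d) :
    quadForm A w = ⟪w, Matrix.toEuclideanCLM (𝕜 := ℝ) A w⟫ := by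
  rw [Matrix.inner_toEuclideanCLM, quadForm, dotProduct]
  simp only [Matrix.mulVec, dotProduct, Finset.mul_sum, mul_assoc]

theorem quadForm_le_opN_mul_norm_sq {d : ℕ} (A : Matrix (Fin d) (Fin d) ℝ) (w : Ed d) :
    quadForm A w ≤ opN A * ‖w‖ ^ 2 :=
  calc quadForm A w ≤ ‖w‖ * ‖Matrix.toEuclideanCLM (𝕜 := ℝ) A w‖ :=
        quadForm_eq_inner A w ▸ real_inner_le_norm _ _
    _ ≤ ‖w‖ * (opN A * ‖w‖) := by gcongr; exact (Matrix.toEuclideanCLM (𝕜 := ℝ) A).le_opNorm w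
    _ = opN A * ‖w‖ ^ 2 := by ring

section InnerProductSpace

variable {E : Type*} [NormedAddCommGroup E] [InnerProductSpace ℝ E]

theorem inner_self_div_norm_smul (u : E) (s : ℝ) : ⟪u, (s / ‖u‖) • u⟫ = s * ‖u‖ := by
  rw [real_inner_smul_right, real_inner_self_eq_norm_sq]
  rcases eq_or_ne ‖u‖ 0 with hu | hu
  · simp [hu]
  · field_simp

theorem norm_div_norm_smul_le (u : E) (s : ℝ) : ‖(s / ‖u‖) • u‖ ≤ |s| := by
  rw [norm_smul, norm_div, norm_norm, Real.norm_eq_abs]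
  rcases eq_or_ne ‖u‖ 0 with hu | hu
  · simp [hu]
  · rw [div_mul_cancel₀ _ hu]

end InnerProductSpace

def DegenerateElliptic {d : ℕ} (F : Ed d → Matrix (Fin d) (Fin d) ℝ → ℝ) : Prop :=
  ∀ (p : Ed d) (Γ Γ' : Matrix (Fin d) (Fin d) ℝ), Γ.IsHermitian → Γ'.IsHermitian →
    (Γ - Γ').PosSemidef → F p Γ ≤ F p Γ'

def HermitianLipschitzWith {d : ℕ} (K : ℝ) (F : Ed d → Matrix (Fin d) (Fin d) ℝ → ℝ) : Prop :=
  ∀ (p p' : Ed d) (Γ Γ' : Matrix (Fin d) (Fin d) ℝ), Γ.IsHermitian → Γ'.IsHermitian →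
    |F p Γ - F p' Γ'| ≤ K * (‖p - p'‖ + opN (Γ - Γ'))

theorem le_add_of_eigenvalues_sub_ge {d : ℕ} {K : ℝ} {F : Ed d → Matrix (Fin d) (Fin d) ℝ → ℝ}
    (hell : DegenerateElliptic F) (hK : 0 ≤ K) (hlip : HermitianLipschitzWith K F)
    {Γ Γ₀ : Matrix (Fin d) (Fin d) ℝ} (hΓ : Γ.IsHermitian) (hΓ₀ : Γ₀.IsHermitian)
    {c : ℝ} (hc : 0 ≤ c) (heig : ∀ i, -c ≤ (hΓ₀.sub hΓ).eigenvalues i) (p p₀ : Ed d) :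
    F p₀ Γ₀ ≤ F p Γ + K * (‖p₀ - p‖ + c) := by
  have hshift : (Γ₀ + c • 1).IsHermitian :=
    hΓ₀.add (Matrix.isHermitian_one.smul (IsSelfAdjoint.all c))
  have hpsd : (Γ₀ + c • 1 - Γ).PosSemidef := by
    rw [add_sub_right_comm]
    exact (hΓ₀.sub hΓ).posSemidef_add_smul_one heig
  have hcost : F p₀ Γ₀ - F p₀ (Γ₀ + c • 1) ≤ K * c := by
    have h := (abs_le.mp (hlip p₀ p₀ _ _ hΓ₀ hshift)).2
    rw [sub_self, norm_zero, zero_add, sub_add_cancel_left, ← neg_smul] at h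
    calc _ ≤ K * opN (-c • 1 : Matrix (Fin d) (Fin d) ℝ) := h
      _ ≤ K * c := by
        gcongr
        simpa [abs_of_nonneg hc] using opN_smul_one_le (d := d) (-c)
  have hmove : F p₀ Γ - F p Γ ≤ K * ‖p₀ - p‖ := by
    simpa [opN_zero] using (abs_le.mp (hlip p₀ p Γ Γ hΓ hΓ)).2
  linarith [hell p₀ _ _ hshift hΓ hpsd]

theorem stmt8_general (d : ℕ) (K0 : ℝ) (hK0 : 0 < K0)
    (F : Ed d → Matrix (Fin d) (Fin d) ℝ → ℝ)
    (hell : ∀ (p : Ed d) (Γ Γ' : Matrix (Fin d) (Fin d) ℝ), Γ.IsHermitian → Γ'.IsHermitian →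
      (Γ - Γ').PosSemidef → F p Γ ≤ F p Γ')
    (hlip : ∀ (p p' : Ed d) (Γ Γ' : Matrix (Fin d) (Fin d) ℝ), Γ.IsHermitian → Γ'.IsHermitian →
      |F p Γ - F p' Γ'| ≤ K0 * (‖p - p'‖ + opN (Γ - Γ')))
    (Γ Γ₀ : Matrix (Fin d) (Fin d) ℝ) (hΓ : Γ.IsHermitian) (hΓ₀ : Γ₀.IsHermitian)
    (c : ℝ) (hc : 0 ≤ c)
    (heig : ∀ i, -c ≤ (Matrix.IsHermitian.sub hΓ₀ hΓ).eigenvalues i)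
    (p p₀ : Ed d)
    (s h : ℝ) (hh : 0 < h) (hsh : K0 * h ≤ Real.sqrt h * s)
    (w : Ed d) (hw : w = -(s / ‖p₀ - p‖) • (p₀ - p)) :
    Real.sqrt h * dotp (p₀ - p) w + (h / 2) * quadForm (Γ₀ - Γ) w - h * F p Γ
      ≤ -h * F p₀ Γ₀ + (h / 2) * opN (Γ₀ - Γ) * s ^ 2 + K0 * h * c := by
  subst hw
  have hdot : dotp (p₀ - p) (-(s / ‖p₀ - p‖) • (p₀ - p)) = -(s * ‖p₀ - p‖) := by
    rw [dotp_eq_inner, neg_smul, inner_neg_right, inner_self_div_norm_smul]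
  have hquad : quadForm (Γ₀ - Γ) (-(s / ‖p₀ - p‖) • (p₀ - p)) ≤ opN (Γ₀ - Γ) * s ^ 2 := by
    refine (quadForm_le_opN_mul_norm_sq _ _).trans ?_
    rw [← sq_abs s, neg_smul, norm_neg]
    gcongr
    · exact opN_nonneg _
    · exact norm_div_norm_smul_le _ _
  have hF := le_add_of_eigenvalues_sub_ge hell hK0.le hlip hΓ hΓ₀ hc heig p p₀
  have hmove : K0 * h * ‖p₀ - p‖ ≤ Real.sqrt h * s * ‖p₀ - p‖ := by gcongr
  rw [hdot]
  linarith [mul_le_mul_of_nonneg_left hF hh.le, mul_le_mul_of_nonneg_left hquad hh.le]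

/-- The key estimate for the choice `w = -s (p₀ - p)/|p₀ - p|` in the
max–min consistency argument. -/
theorem stmt8 (d : ℕ) (hd : 1 ≤ d) (K0 : ℝ) (hK0 : 0 < K0)
    (F : Ed d → Matrix (Fin d) (Fin d) ℝ → ℝ)
    (hell : ∀ (p : Ed d) (Γ Γ' : Matrix (Fin d) (Fin d) ℝ), Γ.IsHermitian → Γ'.IsHermitian →
      (Γ - Γ').PosSemidef → F p Γ ≤ F p Γ')
    (hlip : ∀ (p p' : Ed d) (Γ Γ' : Matrix (Fin d) (Fin d) ℝ), Γ.IsHermitian → Γ'.IsHermitian →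
      |F p Γ - F p' Γ'| ≤ K0 * (‖p - p'‖ + opN (Γ - Γ')))
    (Γ Γ₀ : Matrix (Fin d) (Fin d) ℝ) (hΓ : Γ.IsHermitian) (hΓ₀ : Γ₀.IsHermitian)
    (c : ℝ) (hc : 0 ≤ c)
    (heig : ∀ i, -c ≤ (Matrix.IsHermitian.sub hΓ₀ hΓ).eigenvalues i)
    (p p₀ : Ed d) (hne : p ≠ p₀)
    (s h : ℝ) (hs : 0 < s) (hh : 0 < h) (hsh : K0 * h ≤ Real.sqrt h * s)
    (w : Ed d) (hw : w = -(s / ‖p₀ - p‖) • (p₀ - p)) :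
    Real.sqrt h * dotp (p₀ - p) w + (h / 2) * quadForm (Γ₀ - Γ) w - h * F p Γ
      ≤ -h * F p₀ Γ₀ + (h / 2) * opN (Γ₀ - Γ) * s ^ 2 + K0 * h * c :=
  stmt8_general d K0 hK0 F hell hlip Γ Γ₀ hΓ hΓ₀ c hc heig p p₀ s h hh hsh w hw
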